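/- arXiv:2412.05080 — 4 statements merged into one kernel-verified Lean document; each statement's English description precedes it below -/
import Mathlib

section
/- The quadratic form 3x² + 8xy + 3y² - 2z² = 0 has no nontrivial integer solutions; that is, if x, y, z are integers with 3x² + 8xy + 3y² = 2z², then x = y = z = 0. -/
lemma even_of_eq (x y z : ℤ) (h : 3 * x ^ 2 + 8 * x * y + 3 * y ^ 2 = 2 * z ^ 2) :
    2 ∣ x ∧ 2 ∣ y ∧ 2 ∣ z := by
  have h8 : ((3 * x ^ 2 + 8 * x * y + 3 * y ^ 2 : ℤ) : ZMod 8)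
      = ((2 * z ^ 2 : ℤ) : ZMod 8) := by rw [h]
  push_cast at h8
  have key : ∀ a b c : ZMod 8, 3 * a ^ 2 + 8 * a * b + 3 * b ^ 2 = 2 * c ^ 2 →
      4 * a = 0 ∧ 4 * b = 0 ∧ 4 * c = 0 := by decide
  obtain ⟨ha, hb, hc⟩ := key _ _ _ h8
  refine ⟨?_, ?_, ?_⟩
  · have : ((4 * x : ℤ) : ZMod 8) = 0 := by push_cast; exact ha
    rw [ZMod.intCast_zmod_eq_zero_iff_dvd] at this
    omega
  · have : ((4 * y : ℤ) : ZMod 8) = 0 := by push_cast; exact hb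
    rw [ZMod.intCast_zmod_eq_zero_iff_dvd] at this
    omega
  · have : ((4 * z : ℤ) : ZMod 8) = 0 := by push_cast; exact hc
    rw [ZMod.intCast_zmod_eq_zero_iff_dvd] at this
    omega

lemma descent : ∀ n : ℕ, ∀ x y z : ℤ, x.natAbs + y.natAbs + z.natAbs = n →
    3 * x ^ 2 + 8 * x * y + 3 * y ^ 2 = 2 * z ^ 2 → x = 0 ∧ y = 0 ∧ z = 0 := by
  intro n
  induction n using Nat.strong_induction_on with
  | _ n ih =>
    intro x y z hn h
    rcases Nat.eq_zero_or_pos n with h0 | hpos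
    · subst h0; omega
    · obtain ⟨⟨a, rfl⟩, ⟨b, rfl⟩, ⟨c, rfl⟩⟩ := even_of_eq x y z h
      have h' : 3 * a ^ 2 + 8 * a * b + 3 * b ^ 2 = 2 * c ^ 2 := by nlinarith [h]
      have hlt : a.natAbs + b.natAbs + c.natAbs < n := by
        have h1 : (2 * a).natAbs = 2 * a.natAbs := by simp [Int.natAbs_mul]
        have h2 : (2 * b).natAbs = 2 * b.natAbs := by simp [Int.natAbs_mul]
        have h3 : (2 * c).natAbs = 2 * c.natAbs := by simp [Int.natAbs_mul]
        omega
      obtain ⟨ha, hb, hc⟩ := ih _ hlt a b c rfl h'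
      subst ha; subst hb; subst hc; simp

theorem stmt_0 (x y z : ℤ) (h : 3 * x ^ 2 + 8 * x * y + 3 * y ^ 2 = 2 * z ^ 2) :
    x = 0 ∧ y = 0 ∧ z = 0 := by
  exact descent _ x y z rfl h
end

section
/- If x, y are integers with 6x² + 16xy + 6y² = -2 and 3x + 4y > 0, then 12x + 9y > 0. (Equivalently, any (-2)-class intersecting h₁ positively also intersects h₂ positively.) -/
theorem stmt_3 (x y : ℤ) (h : 6 * x ^ 2 + 16 * x * y + 6 * y ^ 2 = -2)
    (hpos : 3 * x + 4 * y > 0) : 12 * x + 9 * y > 0 := by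
  have ht : (3*x+4*y)^2 - 7*y^2 = -3 := by ring_nf; linarith [h]
  rcases le_or_gt y 0 with hy | hy
  · nlinarith
  · have hy1 : y ≥ 1 := hy
    have h16 : 16*(3*x+4*y)^2 > 49*y^2 := by nlinarith
    nlinarith [mul_pos (show (0:ℤ) < 4*(3*x+4*y) by linarith) (show (0:ℤ) < 7*y by linarith)]
end

section
/- For the quadratic form q(x, y, z) = 6x² + 16xy + 6y² - 4z², there is no triple of integers (x, y, z) with q(x,y,z) ∈ {-2, -4, -12, -36}, 3x + 4y > 0, and 3x + 5y + 2z < 0. -/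
theorem stmt_15 :
    ¬ ∃ x y z : ℤ,
      (6 * x ^ 2 + 16 * x * y + 6 * y ^ 2 - 4 * z ^ 2) ∈ ({-2, -4, -12, -36} : Set ℤ) ∧
      3 * x + 4 * y > 0 ∧ 3 * x + 5 * y + 2 * z < 0 := by
  rintro ⟨x, y, z, hq, h1, h2⟩
  simp only [Set.mem_insert_iff, Set.mem_singleton_iff] at hq
  obtain ⟨t, ht⟩ : ∃ t : ℤ, t = 3 * x + 4 * y := ⟨_, rfl⟩
  have h3 : 2 * t * t - 14 * y * y - 12 * z * z
      = 3 * (6 * x ^ 2 + 16 * x * y + 6 * y ^ 2 - 4 * z ^ 2) := by rw [ht]; ring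
  have hq3 : 2 * t * t - 14 * y * y - 12 * z * z = -6 ∨
      2 * t * t - 14 * y * y - 12 * z * z = -12 ∨
      2 * t * t - 14 * y * y - 12 * z * z = -36 ∨
      2 * t * t - 14 * y * y - 12 * z * z = -108 := by
    rcases hq with h | h | h | h <;> rw [h] at h3 <;> norm_num at h3 <;> tauto
  have ht1 : 1 ≤ t := by omega
  have ht2 : t ≤ -(y + 2 * z) - 1 := by omega
  have hge : -108 ≤ 2 * t * t - 14 * y * y - 12 * z * z := by
    rcases hq3 with h | h | h | h <;> linarith
  have htt : t * t < (y + 2 * z) * (y + 2 * z) := by nlinarith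
  have hB : 2 * y * y + (y - z) * (y - z) ≤ 26 := by nlinarith
  have hy1 : -3 ≤ y := by nlinarith
  have hy2 : y ≤ 3 := by nlinarith
  have hz1 : y - 5 ≤ z := by nlinarith
  have hz2 : z ≤ y + 5 := by nlinarith
  have hty : (t - y) % 3 = 0 := by omega
  clear h3 hq h1 h2 ht hge htt hB x
  interval_cases y <;> interval_cases z <;> interval_cases t <;> omega
end

section
/- The pushforward (ι_i)_* given by the inverse-transpose action of Mᵢ maps the basis {L_i, K_i, E} of the subcone J_i as follows: (ι_i)_*(L_i) = K_{i+1}, (ι_i)_*(K_i) = 5L_{i+1} + 2K_{i+1} + E, and (ι_i)_*(E) = 4L_{i+1} + E; consequently (ι_i)_*(J_i) ⊆ J_{i+1}. Concretely, with L₁ = H₂ - (3/2)E, K₁ = 2H₂ - H₁ - (1/2)E, L₂ = H₁ - (3/2)E, K₂ = 2H₁ - H₂ - (1/2)E, and ι₁ acting on NS by the matrix M₁ = [[5,4,8],[-6,-5,-8],[0,0,-1]] in the basis {H₁,E,H₂} (self-dual via q), one verifies: M₁ applied to H₂ - (3/2)E equals 2H₁ - H₂ - (1/2)E; M₁ applied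 to 2H₂ - H₁ - (1/2)E equals 9H₁ - 2H₂ - (15/2)E = 5L₂ + 2K₂ + E; and M₁ applied to E equals 4H₁ - 5E = 4L₂ + E. -/
-- Coordinates below are in the basis {H₁, E, H₂} of NS(S^[3]) ⊗ ℚ.
noncomputable section

/-- `L₁ = H₂ - (3/2)E` -/
def L1 : Fin 3 → ℚ := ![0, -3/2, 1]
/-- `K₁ = 2H₂ - H₁ - (1/2)E` -/
def K1 : Fin 3 → ℚ := ![-1, -1/2, 2]
/-- `L₂ = H₁ - (3/2)E` -/
def L2 : Fin 3 → ℚ := ![1, -3/2, 0]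
/-- `K₂ = 2H₁ - H₂ - (1/2)E` -/
def K2 : Fin 3 → ℚ := ![2, -1/2, -1]
/-- the exceptional class `E` -/
def Ecl : Fin 3 → ℚ := ![0, 1, 0]
/-- The matrix of `ι₁` on `NS` in the basis `{H₁, E, H₂}` (self-dual via `q`),
giving the pushforward `(ι₁)_*` on curve classes. -/
def M1 : Matrix (Fin 3) (Fin 3) ℚ := !![5, 4, 8; -6, -5, -8; 0, 0, -1]

theorem stmt_19 :
    M1.mulVec L1 = K2 ∧
    M1.mulVec K1 = 5 • L2 + 2 • K2 + Ecl ∧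
    M1.mulVec Ecl = 4 • L2 + Ecl ∧
    ∀ a b c : ℚ, 0 ≤ a → 0 ≤ b → 0 ≤ c →
      ∃ a' b' c' : ℚ, 0 ≤ a' ∧ 0 ≤ b' ∧ 0 ≤ c' ∧
        M1.mulVec (a • L1 + b • K1 + c • Ecl) = a' • L2 + b' • K2 + c' • Ecl := by
  have h1 : M1.mulVec L1 = K2 := by
    funext i; fin_cases i <;>
      simp [M1, L1, K2, Matrix.mulVec, dotProduct, Fin.sum_univ_succ] <;> norm_num
  have h2 : M1.mulVec K1 = 5 • L2 + 2 • K2 + Ecl := by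
    funext i; fin_cases i <;>
      simp [M1, K1, L2, K2, Ecl, Matrix.mulVec, dotProduct, Fin.sum_univ_succ] <;> norm_num
  have h3 : M1.mulVec Ecl = 4 • L2 + Ecl := by
    funext i; fin_cases i <;>
      simp [M1, Ecl, L2, Matrix.mulVec, dotProduct, Fin.sum_univ_succ] <;> norm_num
  refine ⟨h1, h2, h3, fun a b c ha hb hc => ⟨5*b+4*c, a+2*b, b+c, by positivity, by positivity, by positivity, ?_⟩⟩
  rw [Matrix.mulVec_add, Matrix.mulVec_add, Matrix.mulVec_smul, Matrix.mulVec_smul,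
    Matrix.mulVec_smul, h1, h2, h3]
  funext i; fin_cases i <;>
    simp [L2, K2, Ecl, Fin.sum_univ_succ] <;> ring


end
end
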